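/- arXiv:1612.06143 — 3 statements merged into one kernel-verified Lean document; each statement's English description precedes it below -/
import Mathlib

section
/- Let Φ be a finite irreducible crystallographic root system, I an abelian nilradical of Φ⁺ (i.e., I = {β ∈ Φ⁺ : α ≤ β} for a simple root α of multiplicity 1 in the highest root, or I = ∅), H a linear subspace of the ambient space E, and Ψ = Φ ∩ H. Then I ∩ H is an abelian nilradical of Ψ⁺ = Ψ ∩ Φ⁺; that is, for each irreducible component Ψᵢ of Ψ, the intersection I ∩ Ψᵢ is either empty or the principal ideal of Ψᵢ⁺ generated by a simple root of Ψᵢ⁺ of multiplicity 1 in the highest root of Ψᵢ. -/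
local notation "⟪" x ", " y "⟫" => @inner ℝ _ _ x y

/-- A finite (crystallographic) root system in a real inner product space. -/
structure CrystRS (E : Type) [NormedAddCommGroup E] [InnerProductSpace ℝ E] where
  roots : Set E
  finite : roots.Finite
  nonzero : ∀ β ∈ roots, β ≠ (0 : E)
  neg_mem : ∀ β ∈ roots, -β ∈ roots
  cartan : ∀ β ∈ roots, ∀ γ ∈ roots, ∃ n : ℤ, 2 * ⟪β, γ⟫ = (n : ℝ) * ⟪γ, γ⟫
  reflect : ∀ β ∈ roots, ∀ γ ∈ roots, β - (2 * ⟪β, γ⟫ / ⟪γ, γ⟫) • γ ∈ roots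

namespace CrystRS

variable {E : Type} [NormedAddCommGroup E] [InnerProductSpace ℝ E]

/-- Irreducibility: the set of roots admits no nontrivial orthogonal decomposition. -/
def Irred (R : CrystRS E) : Prop :=
  ∀ A B : Set E, R.roots = A ∪ B → (∀ a ∈ A, ∀ b ∈ B, ⟪a, b⟫ = 0) → A = ∅ ∨ B = ∅

end CrystRS

/-- A root system equipped with a system of simple roots (hence a positive system). -/
structure BasedRS (E : Type) [NormedAddCommGroup E] [InnerProductSpace ℝ E]
    extends CrystRS E where
  simple : Finset E
  simple_sub : (simple : Set E) ⊆ roots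
  simple_indep : LinearIndependent ℝ (fun α : {x // x ∈ simple} => (α : E))
  decomp : ∀ β ∈ roots,
    β ∈ AddSubmonoid.closure (simple : Set E) ∨ -β ∈ AddSubmonoid.closure (simple : Set E)

/-- `γ - β` is a nonnegative integer combination of elements of `P`. -/
def leRel {E : Type} [NormedAddCommGroup E] [InnerProductSpace ℝ E]
    (P : Set E) (β γ : E) : Prop := γ - β ∈ AddSubmonoid.closure P

/-- The indecomposable elements of `P` (the simple roots of a positive system `P`). -/
def SimpleOf {E : Type} [NormedAddCommGroup E] [InnerProductSpace ℝ E]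
    (P : Set E) : Set E := {β ∈ P | ∀ γ ∈ P, ∀ δ ∈ P, β ≠ γ + δ}

/-- `C` is an irreducible component of `Ψ`: nonempty, orthogonal to the rest of `Ψ`,
and admitting no further nontrivial orthogonal decomposition. -/
def IsComponent {E : Type} [NormedAddCommGroup E] [InnerProductSpace ℝ E]
    (Ψ C : Set E) : Prop :=
  C ⊆ Ψ ∧ C.Nonempty ∧ (∀ a ∈ C, ∀ b ∈ Ψ \ C, ⟪a, b⟫ = 0) ∧
    ∀ A B : Set E, C = A ∪ B → (∀ a ∈ A, ∀ b ∈ B, ⟪a, b⟫ = 0) → A = ∅ ∨ B = ∅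

namespace BasedRS

variable {E : Type} [NormedAddCommGroup E] [InnerProductSpace ℝ E] (R : BasedRS E)

/-- The positive roots: roots that are nonnegative integer combinations of simple roots. -/
def pos : Set E := {β ∈ R.roots | β ∈ AddSubmonoid.closure (R.simple : Set E)}

/-- The standard partial order: `γ - β` is a nonnegative integer combination of
simple roots. -/
def le (β γ : E) : Prop := γ - β ∈ AddSubmonoid.closure (R.simple : Set E)

def lt (β γ : E) : Prop := R.le β γ ∧ β ≠ γ

/-- An abelian ideal of the positive system: upward closed, and no two of its
elements sum to a root. -/
def IsAbelianIdeal (I : Set E) : Prop :=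
  I ⊆ R.pos ∧ (∀ β ∈ I, ∀ γ ∈ R.pos, R.le β γ → γ ∈ I) ∧
    ∀ β ∈ I, ∀ γ ∈ I, β + γ ∉ R.roots

/-- A short root: of minimal length among the roots. -/
def IsShort (β : E) : Prop := β ∈ R.roots ∧ ∀ γ ∈ R.roots, ‖β‖ ≤ ‖γ‖

/-- A long root: of maximal length among the roots. -/
def IsLong (β : E) : Prop := β ∈ R.roots ∧ ∀ γ ∈ R.roots, ‖γ‖ ≤ ‖β‖

/-- `θ` is the highest root. -/
def IsHighest (θ : E) : Prop := θ ∈ R.pos ∧ ∀ β ∈ R.roots, R.le β θ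

/-- The coefficient of the simple root `α` in `β` equals `1`. -/
def coeffOne (α β : E) : Prop :=
  β - α ∈ Submodule.span ℤ ((R.simple : Set E) \ {α})

end BasedRS

/-!
Let `f` be the coefficient of `α` with respect to the simple roots. As `f θ = 1` and `f` is a
nonnegative integer on positive roots, `I` is the set of roots with `f = 1`, and `f ≤ 1` on roots.

A component `C` of `Φ ∩ H` is a root system in its own right, because a root of `H` in the span of
`C` lies in `C`; its positive system `C ∩ Φ⁺` consists of the roots of positive height, and its
simple roots are the indecomposable ones. By irreducibility, the positive system has a unique
maximal element `θ_C`, whose coefficients on all simple roots of `C` are positive. Since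
`f θ_C = 1` and `f` takes integer values on these simple roots, exactly one of them, `α_C`, has
`f α_C = 1` while the others lie in the kernel of `f`. Hence `α_C` has coefficient `1` in `θ_C`,
and a positive root `β` of `C` has `f β = 1` exactly when `α_C ≤ β`.
-/

open Submodule (span span_le subset_span)

theorem LinearIndepOn.exists_linearMap_eq {K V : Type*} [Field K] [AddCommGroup V] [Module K V]
    {s : Set V} (hs : LinearIndepOn K id s) (φ : V → K) :
    ∃ f : V →ₗ[K] K, ∀ a ∈ s, f a = φ a := by
  refine ⟨(Module.Basis.extend hs).constr K fun x => φ x, fun a ha => ?_⟩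
  have := (Module.Basis.extend hs).constr_basis K (fun x => φ x) ⟨a, hs.subset_extend _ ha⟩
  rwa [Module.Basis.extend_apply_self] at this

theorem Set.Finite.induction_on_apply_lt {α : Type*} {P : Set α} (hP : P.Finite) (g : α → ℝ)
    {q : α → Prop} (h : ∀ β ∈ P, (∀ γ ∈ P, g γ < g β → q γ) → q β) {β : α} (hβ : β ∈ P) : q β :=
  (Set.wellFoundedOn_image.1 (hP.image g).wellFoundedOn).induction hβ h

theorem apply_nonneg_of_apply_eq_one_of_apply_eq_zero {V : Type*} [AddCommGroup V] [Module ℝ V]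
    {S : Set V} {f : V →ₗ[ℝ] ℝ} {α : V} (hfα : f α = 1) (hf : ∀ s ∈ S, s ≠ α → f s = 0) :
    ∀ s ∈ S, 0 ≤ f s := fun s hs => by
  rcases eq_or_ne s α with rfl | hsα
  exacts [hfα ▸ zero_le_one, (hf s hs hsα).ge]

namespace AddSubmonoid

variable {V : Type*} [AddCommGroup V] [Module ℝ V] {S : Set V} {f : V →ₗ[ℝ] ℝ} {x : V}

theorem apply_nonneg_of_mem_closure (hf : ∀ s ∈ S, 0 ≤ f s) (hx : x ∈ closure S) : 0 ≤ f x := by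
  induction hx using closure_induction with
  | mem s hs => exact hf s hs
  | zero => simp
  | add x y _ _ hx hy => rw [map_add]; exact add_nonneg hx hy

theorem eq_zero_or_apply_pos_of_mem_closure (hf : ∀ s ∈ S, 0 < f s) (hx : x ∈ closure S) :
    x = 0 ∨ 0 < f x := by
  induction hx using closure_induction with
  | mem s hs => exact .inr (hf s hs)
  | zero => exact .inl rfl
  | add x y _ _ hx hy =>
    rcases hx with rfl | hx
    · simpa using hy
    rcases hy with rfl | hy
    · simpa using Or.inr hx
    exact .inr (by rw [map_add]; positivity)

theorem exists_nat_eq_of_mem_closure (hf : ∀ s ∈ S, ∃ n : ℕ, f s = n) (hx : x ∈ closure S) :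
    ∃ n : ℕ, f x = n := by
  induction hx using closure_induction with
  | mem s hs => exact hf s hs
  | zero => exact ⟨0, by simp⟩
  | add x y _ _ hx hy =>
    obtain ⟨m, hm⟩ := hx
    obtain ⟨n, hn⟩ := hy
    exact ⟨m + n, by rw [map_add, hm, hn, Nat.cast_add]⟩

theorem sub_mem_closure_iff_one_le {α : V} (hfα : f α = 1) (hf : ∀ s ∈ S, s ≠ α → f s = 0)
    (hx : x ∈ closure S) : x - α ∈ closure S ↔ 1 ≤ f x := by
  have hf0 := apply_nonneg_of_apply_eq_one_of_apply_eq_zero hfα hf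
  refine ⟨fun h => ?_, fun h => ?_⟩
  · have := apply_nonneg_of_mem_closure hf0 h
    rw [map_sub, hfα] at this
    linarith
  have key : ∀ y ∈ closure S, f y = 0 ∨ y - α ∈ closure S := fun y hy => by
    induction hy using closure_induction with
    | mem s hs =>
      rcases eq_or_ne s α with rfl | hsα
      · exact .inr (by simp)
      · exact .inl (hf s hs hsα)
    | zero => exact .inl (map_zero f)
    | add y z hy hz hy' hz' =>
      rcases hy' with hy' | hy'
      · rcases hz' with hz' | hz'
        · exact .inl (by rw [map_add, hy', hz', add_zero])
        · exact .inr (by rw [add_sub_assoc]; exact add_mem hy hz')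
      · exact .inr (by rw [add_sub_right_comm]; exact add_mem hy' hz)
  exact (key x hx).resolve_left (by linarith)

theorem mem_closure_diff_singleton_of_apply_eq_zero {α : V} (hfα : f α = 1)
    (hf : ∀ s ∈ S, s ≠ α → f s = 0) (hx : x ∈ closure S) (h0 : f x = 0) :
    x ∈ closure (S \ {α}) := by
  have hf0 := apply_nonneg_of_apply_eq_one_of_apply_eq_zero hfα hf
  have key : ∀ y ∈ closure S, y ∈ closure (S \ {α}) ∨ 0 < f y := fun y hy => by
    induction hy using closure_induction with
    | mem s hs =>
      rcases eq_or_ne s α with rfl | hsα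
      · exact .inr (hfα ▸ zero_lt_one)
      · exact .inl (subset_closure ⟨hs, hsα⟩)
    | zero => exact .inl (zero_mem _)
    | add y z hy' hz' hy hz =>
      have := apply_nonneg_of_mem_closure hf0 hy'
      have := apply_nonneg_of_mem_closure hf0 hz'
      rcases hy with hy | hy
      · rcases hz with hz | hz
        · exact .inl (add_mem hy hz)
        · exact .inr (by rw [map_add]; linarith)
      · exact .inr (by rw [map_add]; linarith)
  exact (key x hx).resolve_right (by rw [h0]; exact lt_irrefl 0)

end AddSubmonoid

section FullSupport

variable {V : Type*} [AddCommGroup V] [Module ℝ V] {S : Finset V} {c : V → ℕ} {θ : V}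

theorem sum_le_apply_of_eq_sum (hθ : θ = ∑ s ∈ S, c s • s) {T : Finset V}
    (hT : ∀ s ∈ T, s ∈ S ∧ c s ≠ 0) (h : V →ₗ[ℝ] ℝ) (hh : ∀ s ∈ S, c s ≠ 0 → 0 ≤ h s) :
    ∑ s ∈ T, h s ≤ h θ := by
  have hterm : ∀ s ∈ S, 0 ≤ (c s : ℝ) * h s := fun s hs => by
    rcases eq_or_ne (c s) 0 with h0 | h0
    · simp [h0]
    · exact mul_nonneg (Nat.cast_nonneg _) (hh s hs h0)
  calc ∑ s ∈ T, h s ≤ ∑ s ∈ T, (c s : ℝ) * h s :=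
        Finset.sum_le_sum fun s hs => le_mul_of_one_le_left (hh s (hT s hs).1 (hT s hs).2)
          (by exact_mod_cast Nat.one_le_iff_ne_zero.2 (hT s hs).2)
    _ ≤ ∑ s ∈ S, (c s : ℝ) * h s :=
        Finset.sum_le_sum_of_subset_of_nonneg (fun s hs => (hT s hs).1) fun s hs _ => hterm s hs
    _ = h θ := by simp [hθ, map_sum, map_nsmul]

theorem exists_apply_eq_one_of_eq_sum (hθ : θ = ∑ s ∈ S, c s • s) (hc : ∀ s ∈ S, c s ≠ 0)
    {f : V →ₗ[ℝ] ℝ} (hf : ∀ s ∈ S, ∃ n : ℕ, f s = n) (hfθ : f θ = 1) :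
    ∃ α ∈ S, f α = 1 ∧ ∀ s ∈ S, s ≠ α → f s = 0 := by
  classical
  have hf0 : ∀ s ∈ S, c s ≠ 0 → 0 ≤ f s := fun s hs _ => by
    obtain ⟨n, hn⟩ := hf s hs
    exact hn ▸ Nat.cast_nonneg n
  have hle : ∀ T ⊆ S, ∑ s ∈ T, f s ≤ 1 := fun T hT =>
    hfθ ▸ sum_le_apply_of_eq_sum hθ (fun s hs => ⟨hT hs, hc s (hT hs)⟩) f hf0
  have hnat : ∀ s ∈ S, f s ≠ 0 → f s = 1 := fun s hs h => by
    obtain ⟨n, hn⟩ := hf s hs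
    have : (n : ℝ) ≤ 1 := hn ▸ by simpa using hle {s} (by simpa)
    have : n ≤ 1 := by exact_mod_cast this
    interval_cases n <;> simp_all
  obtain ⟨α, hα, hfα⟩ : ∃ α ∈ S, f α ≠ 0 := by
    by_contra! h
    rw [hθ, map_sum, Finset.sum_eq_zero fun s hs => by rw [map_nsmul, h s hs, smul_zero]] at hfθ
    exact zero_ne_one hfθ
  refine ⟨α, hα, hnat α hα hfα, fun s hs hsα => ?_⟩
  by_contra hs0
  have := hle {s, α} (Finset.insert_subset hs (by simpa))
  rw [Finset.sum_pair hsα, hnat s hs hs0, hnat α hα hfα] at this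
  norm_num at this

end FullSupport

section PositiveSystem

variable {E : Type} [NormedAddCommGroup E] [InnerProductSpace ℝ E]

theorem exists_inner_pos_of_mem_closure {T : Set E} {β x : E} (hx : x ∈ AddSubmonoid.closure T)
    (h : 0 < ⟪β, x⟫) : ∃ t ∈ T, 0 < ⟪β, t⟫ := by
  by_contra! hT
  have := AddSubmonoid.apply_nonneg_of_mem_closure (f := -innerₗ E β) (by simpa using hT) hx
  simp only [LinearMap.neg_apply, innerₗ_apply_apply, neg_nonneg] at this
  linarith

variable {P : Set E} {g : E →ₗ[ℝ] ℝ}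

theorem closure_simpleOf (hP : P.Finite) (hgP : ∀ β ∈ P, 0 < g β) :
    AddSubmonoid.closure (SimpleOf P) = AddSubmonoid.closure P := by
  refine le_antisymm (AddSubmonoid.closure_mono fun β hβ => hβ.1)
    (AddSubmonoid.closure_le.2 fun β hβ => ?_)
  refine hP.induction_on_apply_lt g (fun β hβ ih => ?_) hβ
  by_cases hs : β ∈ SimpleOf P
  · exact AddSubmonoid.subset_closure hs
  obtain ⟨γ, hγ, δ, hδ, rfl⟩ : ∃ γ ∈ P, ∃ δ ∈ P, β = γ + δ := by
    by_contra! h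
    exact hs ⟨hβ, h⟩
  have := hgP γ hγ
  have := hgP δ hδ
  exact add_mem (ih γ hγ (by rw [map_add]; linarith)) (ih δ hδ (by rw [map_add]; linarith))

def IsMaximalRoot (P : Set E) (θ : E) : Prop := θ ∈ P ∧ ∀ β ∈ P, leRel P θ β → β = θ

theorem exists_isMaximalRoot_leRel (hP : P.Finite) (hgP : ∀ β ∈ P, 0 < g β) {β : E}
    (hβ : β ∈ P) : ∃ θ, IsMaximalRoot P θ ∧ leRel P β θ := by
  obtain ⟨θ, ⟨hθ, hβθ⟩, hmax⟩ := Set.exists_max_image {γ ∈ P | leRel P β γ} g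
    (hP.subset fun γ hγ => hγ.1) ⟨β, hβ, by simp [leRel]⟩
  refine ⟨θ, ⟨hθ, fun γ hγ hθγ => ?_⟩, hβθ⟩
  have hβγ : leRel P β γ := by
    simpa only [leRel, sub_add_sub_cancel] using
      add_mem (show γ - θ ∈ AddSubmonoid.closure P from hθγ) hβθ
  rcases AddSubmonoid.eq_zero_or_apply_pos_of_mem_closure hgP hθγ with h | h
  · exact sub_eq_zero.1 h
  · have := hmax γ ⟨hγ, hβγ⟩
    rw [map_sub] at h
    linarith

end PositiveSystem

namespace CrystRS

variable {E : Type} [NormedAddCommGroup E] [InnerProductSpace ℝ E] (R : CrystRS E)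

theorem sub_mem_of_inner_pos {β γ : E} (hβ : β ∈ R.roots) (hγ : γ ∈ R.roots)
    (h : 0 < ⟪β, γ⟫) : β = γ ∨ β - γ ∈ R.roots := by
  have hβ2 : 0 < ⟪β, β⟫ := real_inner_self_pos.2 (R.nonzero β hβ)
  have hγ2 : 0 < ⟪γ, γ⟫ := real_inner_self_pos.2 (R.nonzero γ hγ)
  obtain ⟨m, hm⟩ := R.cartan β hβ γ hγ
  obtain ⟨n, hn⟩ := R.cartan γ hγ β hβ
  rw [real_inner_comm] at hn
  have hm0 : (0 : ℝ) < m := pos_of_mul_pos_left (hm ▸ by linarith) hγ2.le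
  have hn0 : (0 : ℝ) < n := pos_of_mul_pos_left (hn ▸ by linarith) hβ2.le
  rcases (show m = 1 ∨ 2 ≤ m by have : 0 < m := (by exact_mod_cast hm0); omega) with rfl | hm2
  · right
    have hc : 2 * ⟪β, γ⟫ / ⟪γ, γ⟫ = 1 := by rw [hm]; field_simp; simp
    have := R.reflect β hβ γ hγ
    rwa [hc, one_smul] at this
  rcases (show n = 1 ∨ 2 ≤ n by have : 0 < n := (by exact_mod_cast hn0); omega) with rfl | hn2
  · right
    have hc : 2 * ⟪γ, β⟫ / ⟪β, β⟫ = 1 := by rw [real_inner_comm, hn]; field_simp; simp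
    have := R.neg_mem _ (R.reflect γ hγ β hβ)
    rwa [hc, one_smul, neg_sub] at this
  left
  -- both Cartan integers are `≥ 2`, so Cauchy–Schwarz is an equality and `β = γ`
  have hm2 : (2 : ℝ) ≤ m := by exact_mod_cast hm2
  have hn2 : (2 : ℝ) ≤ n := by exact_mod_cast hn2
  have hcs := real_inner_mul_inner_self_le β γ
  have h1 : ⟪β, γ⟫ = ⟪γ, γ⟫ := by nlinarith
  have h2 : ⟪β, γ⟫ = ⟪β, β⟫ := by nlinarith
  rw [← sub_eq_zero, ← inner_self_eq_zero (𝕜 := ℝ), inner_sub_left, inner_sub_right,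
    inner_sub_right, real_inner_comm β γ]
  linarith

theorem add_mem_of_inner_neg {β γ : E} (hβ : β ∈ R.roots) (hγ : γ ∈ R.roots)
    (h : ⟪β, γ⟫ < 0) : β = -γ ∨ β + γ ∈ R.roots := by
  simpa using R.sub_mem_of_inner_pos hβ (R.neg_mem γ hγ) (by simpa [inner_neg_right] using h)

theorem sub_sub_mem_of_inner_sub_eq_zero {β s : E} (hβ : β ∈ R.roots) (hs : s ∈ R.roots)
    (h : ⟪β - s, s⟫ = 0) : β - s - s ∈ R.roots := by
  have hs2 : ⟪s, s⟫ ≠ 0 := (real_inner_self_pos.2 (R.nonzero s hs)).ne'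
  have hc : 2 * ⟪β, s⟫ / ⟪s, s⟫ = 2 := by
    rw [inner_sub_left, sub_eq_zero] at h
    rw [h, mul_div_assoc, div_self hs2, mul_one]
  have := R.reflect β hβ s hs
  rwa [hc, two_smul, ← sub_sub] at this

variable (g : E →ₗ[ℝ] ℝ)

def posPart : Set E := {β ∈ R.roots | 0 < g β}

theorem posPart_finite : (R.posPart g).Finite := R.finite.subset fun _ hβ => hβ.1

noncomputable def simpleRoots : Finset E :=
  ((R.posPart_finite g).subset fun _ hβ => hβ.1 : (SimpleOf (R.posPart g)).Finite).toFinset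

variable {R g}

@[simp]
theorem mem_simpleRoots {s : E} : s ∈ R.simpleRoots g ↔ s ∈ SimpleOf (R.posPart g) :=
  Set.Finite.mem_toFinset _

theorem mem_posPart_or_neg_mem (hg : ∀ β ∈ R.roots, g β ≠ 0) {β : E} (hβ : β ∈ R.roots) :
    β ∈ R.posPart g ∨ -β ∈ R.posPart g := by
  rcases (hg β hβ).lt_or_gt with h | h
  · exact .inr ⟨R.neg_mem β hβ, by simpa using h⟩
  · exact .inl ⟨hβ, h⟩

theorem add_mem_posPart_of_inner_neg {β γ : E} (hβ : β ∈ R.posPart g) (hγ : γ ∈ R.posPart g)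
    (h : ⟪β, γ⟫ < 0) : β + γ ∈ R.posPart g := by
  rcases R.add_mem_of_inner_neg hβ.1 hγ.1 h with rfl | h
  · have := hβ.2
    have := hγ.2
    simp only [map_neg] at *
    linarith
  · exact ⟨h, by rw [map_add]; exact add_pos hβ.2 hγ.2⟩

theorem sub_mem_posPart (hg : ∀ β ∈ R.roots, g β ≠ 0) {γ s : E} (hγ : γ ∈ R.posPart g)
    (hs : s ∈ SimpleOf (R.posPart g)) (h : γ - s ∈ R.roots) : γ - s ∈ R.posPart g :=
  (mem_posPart_or_neg_mem hg h).resolve_right fun h' => hs.2 γ hγ _ h' (by abel)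

theorem sub_mem_posPart_of_inner_pos (hg : ∀ β ∈ R.roots, g β ≠ 0) {β s : E}
    (hβ : β ∈ R.posPart g) (hs : s ∈ SimpleOf (R.posPart g)) (h : 0 < ⟪β, s⟫) :
    β = s ∨ β - s ∈ R.posPart g :=
  (R.sub_mem_of_inner_pos hβ.1 hs.1.1 h).imp_right (sub_mem_posPart hg hβ hs)

theorem inner_nonpos_of_mem_simpleOf (hg : ∀ β ∈ R.roots, g β ≠ 0) {s t : E}
    (hs : s ∈ SimpleOf (R.posPart g)) (ht : t ∈ SimpleOf (R.posPart g)) (hst : s ≠ t) :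
    ⟪s, t⟫ ≤ 0 := by
  by_contra! h
  rcases sub_mem_posPart_of_inner_pos hg hs.1 ht h with h | h
  · exact hst h
  · exact hs.2 t ht.1 _ h (by abel)

theorem _root_.IsMaximalRoot.inner_nonneg {θ s : E} (hθ : IsMaximalRoot (R.posPart g) θ)
    (hs : s ∈ R.posPart g) : 0 ≤ ⟪θ, s⟫ := by
  by_contra! h
  have := hθ.2 _ (add_mem_posPart_of_inner_neg hθ.1 hs h)
    (by simpa [leRel] using AddSubmonoid.subset_closure hs)
  exact R.nonzero s hs.1 (by simpa using this)

theorem mem_span_or_mem_span_of_orthogonal (hg : ∀ β ∈ R.roots, g β ≠ 0) {S₁ S₂ : Set E}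
    (hS : SimpleOf (R.posPart g) ⊆ S₁ ∪ S₂) (hS₁ : S₁ ⊆ SimpleOf (R.posPart g))
    (horth : ∀ a ∈ S₁, ∀ b ∈ S₂, ⟪a, b⟫ = 0) {β : E} (hβ : β ∈ R.posPart g) :
    β ∈ span ℝ S₁ ∨ β ∈ span ℝ S₂ := by
  have hperp : ∀ v ∈ span ℝ S₁, ∀ w ∈ span ℝ S₂, ⟪v, w⟫ = 0 := fun v hv w hw =>
    (Submodule.isOrtho_span.2 fun a ha b hb => horth a ha b hb).inner_eq hv hw
  have hdisj : ∀ v ∈ span ℝ S₁, v ∈ span ℝ S₂ → v = 0 := fun v h₁ h₂ =>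
    inner_self_eq_zero.1 (hperp v h₁ v h₂)
  have hcl := closure_simpleOf (R.posPart_finite g) fun β hβ => hβ.2
  refine (R.posPart_finite g).induction_on_apply_lt g
    (q := fun β => β ∈ span ℝ S₁ ∨ β ∈ span ℝ S₂) (fun β hβ ih => ?_) hβ
  obtain ⟨x, hx, y, hy, hxy⟩ : ∃ x ∈ AddSubmonoid.closure S₁, ∃ y ∈ AddSubmonoid.closure S₂,
      x + y = β := by
    rw [← AddSubmonoid.mem_sup, ← AddSubmonoid.closure_union]
    exact AddSubmonoid.closure_mono hS (hcl ▸ AddSubmonoid.subset_closure hβ)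
  have hy' := Submodule.closure_subset_span (R := ℝ) hy
  rcases eq_or_ne x 0 with rfl | hx0
  · exact .inr (by rwa [← hxy, zero_add])
  have hβx : 0 < ⟪β, x⟫ := by
    rw [← hxy, inner_add_left, real_inner_comm x y,
      hperp x (Submodule.closure_subset_span hx) y hy', add_zero]
    exact real_inner_self_pos.2 hx0
  left
  obtain ⟨s, hs, hβs⟩ := exists_inner_pos_of_mem_closure hx hβx
  have hsP := hS₁ hs
  rcases sub_mem_posPart_of_inner_pos hg hβ hsP hβs with rfl | hβs'
  · exact subset_span hs
  have hgs := hsP.1.2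
  rcases ih _ hβs' (by rw [map_sub]; linarith) with h₁ | h₂
  · simpa using add_mem h₁ (subset_span hs)
  -- `β - s ⊥ s`, so reflecting `β` in `s` gives the root `β - 2 s`
  exfalso
  have hγ : β - s - s ∈ R.posPart g := sub_mem_posPart hg hβs' hsP
    (R.sub_sub_mem_of_inner_sub_eq_zero hβ.1 hsP.1.1
      (hperp s (subset_span hs) _ h₂ ▸ real_inner_comm _ _))
  rcases ih _ hγ (by simp only [map_sub]; linarith) with h₃ | h₃
  · exact R.nonzero _ hβs'.1 (hdisj _ (by simpa using add_mem h₃ (subset_span hs)) h₂)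
  · exact R.nonzero s hsP.1.1 (hdisj s (subset_span hs) (by simpa using sub_mem h₂ h₃))

-- a simple root `t` outside the support of `θ` but linked to it would make `θ + t` a root
theorem _root_.IsMaximalRoot.inner_eq_zero_of_coeff_eq_zero (hg : ∀ β ∈ R.roots, g β ≠ 0)
    {θ : E} (hθ : IsMaximalRoot (R.posPart g) θ) {c : E → ℕ}
    (hc : θ = ∑ s ∈ R.simpleRoots g, c s • s) {s t : E} (hs : s ∈ SimpleOf (R.posPart g))
    (hcs : c s ≠ 0) (ht : t ∈ SimpleOf (R.posPart g)) (hct : c t = 0) : ⟪s, t⟫ = 0 := by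
  have hne : ∀ s, c s ≠ 0 → s ≠ t := by rintro s hcs rfl; exact hcs hct
  by_contra hst
  have hst' : ⟪s, t⟫ < 0 := (inner_nonpos_of_mem_simpleOf hg hs ht (hne s hcs)).lt_of_ne hst
  have := sum_le_apply_of_eq_sum hc (T := {s}) (by simpa using ⟨hs, hcs⟩) (-innerₗ E t)
    fun s' hs' hcs' => by
      simpa [real_inner_comm] using
        inner_nonpos_of_mem_simpleOf hg (mem_simpleRoots.1 hs') ht (hne s' hcs')
  have := hθ.inner_nonneg ht.1
  simp only [Finset.sum_singleton, LinearMap.neg_apply, innerₗ_apply_apply] at *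
  linarith [real_inner_comm s t, real_inner_comm θ t]

theorem _root_.IsMaximalRoot.coeff_ne_zero (hg : ∀ β ∈ R.roots, g β ≠ 0) (hirr : R.Irred)
    {θ : E} (hθ : IsMaximalRoot (R.posPart g) θ) {c : E → ℕ}
    (hc : θ = ∑ s ∈ R.simpleRoots g, c s • s) : ∀ s ∈ R.simpleRoots g, c s ≠ 0 := by
  by_contra! ⟨t, ht, hct⟩
  -- the support of `θ` and its complement would split the roots into orthogonal parts
  set S₁ := {s ∈ SimpleOf (R.posPart g) | c s ≠ 0}
  set S₂ := {s ∈ SimpleOf (R.posPart g) | c s = 0}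
  have horth : ∀ s ∈ S₁, ∀ t ∈ S₂, ⟪s, t⟫ = 0 := fun s hs t ht =>
    hθ.inner_eq_zero_of_coeff_eq_zero hg hc hs.1 hs.2 ht.1 ht.2
  have hperp : ∀ v ∈ span ℝ S₁, ∀ w ∈ span ℝ S₂, ⟪v, w⟫ = 0 := fun v hv w hw =>
    (Submodule.isOrtho_span.2 fun a ha b hb => horth a ha b hb).inner_eq hv hw
  have hspan : ∀ β ∈ R.posPart g, β ∈ span ℝ S₁ ∨ β ∈ span ℝ S₂ :=
    fun β hβ => mem_span_or_mem_span_of_orthogonal hg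
      (fun s hs => by by_cases h : c s = 0 <;> simp [S₁, S₂, hs, h])
      (fun s hs => hs.1) horth hβ
  have hθ₁ : θ ∈ span ℝ S₁ := hc ▸ Submodule.sum_mem _ fun s hs => by
    rcases eq_or_ne (c s) 0 with h | h
    · simp [h]
    · exact nsmul_mem (subset_span (show s ∈ S₁ from ⟨mem_simpleRoots.1 hs, h⟩)) _
  have hroots : R.roots = {β ∈ R.roots | β ∈ span ℝ S₁} ∪ {β ∈ R.roots | β ∈ span ℝ S₂} := by
    refine Set.Subset.antisymm (fun β hβ => ?_)
      (Set.union_subset (fun β hβ => hβ.1) fun β hβ => hβ.1)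
    rcases mem_posPart_or_neg_mem hg hβ with h | h
    · exact (hspan β h).imp (⟨hβ, ·⟩) (⟨hβ, ·⟩)
    · exact (hspan _ h).imp (⟨hβ, neg_mem_iff.1 ·⟩) (⟨hβ, neg_mem_iff.1 ·⟩)
  rcases hirr _ _ hroots fun a ha b hb => hperp a ha.2 b hb.2 with h | h
  · exact h.subset ⟨hθ.1.1, hθ₁⟩
  · exact h.subset ⟨(mem_simpleRoots.1 ht).1.1, subset_span ⟨mem_simpleRoots.1 ht, hct⟩⟩

theorem _root_.IsMaximalRoot.eq_of_coeff_ne_zero (hg : ∀ β ∈ R.roots, g β ≠ 0) {θ θ' : E}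
    (hθ : IsMaximalRoot (R.posPart g) θ) (hθ' : IsMaximalRoot (R.posPart g) θ') {c : E → ℕ}
    (hc : θ = ∑ s ∈ R.simpleRoots g, c s • s) (hc0 : ∀ s ∈ R.simpleRoots g, c s ≠ 0) :
    θ' = θ := by
  have hcl := closure_simpleOf (R.posPart_finite g) fun β hβ => hβ.2
  obtain ⟨s, hs, hθ's⟩ := exists_inner_pos_of_mem_closure
    (hcl ▸ AddSubmonoid.subset_closure hθ'.1) (real_inner_self_pos.2 (R.nonzero _ hθ'.1.1))
  have hθθ' : 0 < ⟪θ', θ⟫ := by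
    refine hθ's.trans_le ?_
    simpa using sum_le_apply_of_eq_sum hc (T := {s}) (by simpa using ⟨hs, hc0 s (by simpa)⟩)
      (innerₗ E θ') fun s' hs' _ => hθ'.inner_nonneg (mem_simpleRoots.1 hs').1
  rcases R.sub_mem_of_inner_pos hθ'.1.1 hθ.1.1 hθθ' with h | h
  · exact h
  rcases mem_posPart_or_neg_mem hg h with h | h
  · exact hθ.2 θ' hθ'.1 (AddSubmonoid.subset_closure h)
  · exact (hθ'.2 θ hθ.1 (by simpa [leRel] using AddSubmonoid.subset_closure h)).symm

theorem exists_highest (hg : ∀ β ∈ R.roots, g β ≠ 0) (hirr : R.Irred)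
    (hP : (R.posPart g).Nonempty) :
    ∃ θ ∈ R.posPart g, (∀ β ∈ R.posPart g, leRel (R.posPart g) β θ) ∧
      ∃ c : E → ℕ, θ = ∑ s ∈ R.simpleRoots g, c s • s ∧ ∀ s ∈ R.simpleRoots g, c s ≠ 0 := by
  have hgP : ∀ β ∈ R.posPart g, 0 < g β := fun β hβ => hβ.2
  obtain ⟨θ, hθ, -⟩ := exists_isMaximalRoot_leRel (R.posPart_finite g) hgP hP.some_mem
  obtain ⟨c, -, hc⟩ := AddSubmonoid.mem_closure_finset.1 <| show θ ∈ AddSubmonoid.closure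
      (R.simpleRoots g : Set E) by
    rw [show (R.simpleRoots g : Set E) = SimpleOf (R.posPart g) by ext; simp,
      closure_simpleOf (R.posPart_finite g) hgP]
    exact AddSubmonoid.subset_closure hθ.1
  have hc0 := hθ.coeff_ne_zero hg hirr hc.symm
  refine ⟨θ, hθ.1, fun β hβ => ?_, c, hc.symm, hc0⟩
  obtain ⟨θ', hθ', hβθ'⟩ := exists_isMaximalRoot_leRel (R.posPart_finite g) hgP hβ
  rwa [hθ.eq_of_coeff_ne_zero hg hθ' hc.symm hc0] at hβθ'

theorem levelSet_eq_empty_or_eq_principal (hg : ∀ β ∈ R.roots, g β ≠ 0) (hirr : R.Irred)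
    {f : E →ₗ[ℝ] ℝ} (hf : ∀ β ∈ R.posPart g, ∃ n : ℕ, f β = n)
    (hf1 : ∀ β ∈ R.posPart g, f β ≤ 1) :
    {β ∈ R.posPart g | f β = 1} = ∅ ∨
      ∃ α θ : E, α ∈ SimpleOf (R.posPart g) ∧ θ ∈ R.posPart g ∧
        (∀ β ∈ R.posPart g, leRel (R.posPart g) β θ) ∧
        θ - α ∈ span ℤ (SimpleOf (R.posPart g) \ {α}) ∧
        {β ∈ R.posPart g | f β = 1} = {β ∈ R.posPart g | leRel (R.posPart g) α β} := by
  rcases Set.eq_empty_or_nonempty {β ∈ R.posPart g | f β = 1} with h | ⟨β₀, hβ₀, hfβ₀⟩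
  · exact .inl h
  right
  obtain ⟨θ, hθ, hhigh, c, hc, hc0⟩ := R.exists_highest hg hirr ⟨β₀, hβ₀⟩
  have hcl := closure_simpleOf (R.posPart_finite g) fun β hβ => hβ.2
  have hf0 : ∀ β ∈ R.posPart g, 0 ≤ f β := fun β hβ => by
    obtain ⟨n, hn⟩ := hf β hβ
    exact hn ▸ Nat.cast_nonneg n
  have hfθ : f θ = 1 := by
    refine le_antisymm (hf1 θ hθ) ?_
    have := AddSubmonoid.apply_nonneg_of_mem_closure hf0 (hhigh β₀ hβ₀)
    rw [map_sub, hfβ₀] at this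
    linarith
  obtain ⟨α, hα, hfα, hf₀⟩ := exists_apply_eq_one_of_eq_sum hc hc0
    (fun s hs => hf s (mem_simpleRoots.1 hs).1) hfθ
  simp only [mem_simpleRoots] at hα hf₀
  refine ⟨α, θ, hα, hθ, hhigh, ?_, ?_⟩
  · have hθα : θ - α ∈ AddSubmonoid.closure (SimpleOf (R.posPart g)) := hcl ▸ hhigh α hα.1
    exact Submodule.closure_subset_span
      (AddSubmonoid.mem_closure_diff_singleton_of_apply_eq_zero hfα hf₀ hθα (by simp [hfθ, hfα]))
  · ext β
    refine and_congr_right fun hβ => ?_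
    rw [leRel, ← hcl, AddSubmonoid.sub_mem_closure_iff_one_le hfα hf₀
      (hcl ▸ AddSubmonoid.subset_closure hβ)]
    exact ⟨fun h => h.ge, fun h => le_antisymm (hf1 β hβ) h⟩

end CrystRS

namespace IsComponent

variable {E : Type} [NormedAddCommGroup E] [InnerProductSpace ℝ E] {R : CrystRS E}
  {H : Submodule ℝ E} {C : Set E}

-- a root of `H` outside `C` is orthogonal to `C`, so it cannot lie in the span of `C`
theorem mem_of_mem_span (hC : IsComponent (R.roots ∩ H) C) {x : E} (hx : x ∈ R.roots)
    (hxH : x ∈ H) (hxC : x ∈ span ℝ C) : x ∈ C := by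
  by_contra hxC'
  have : span ℝ C ≤ (ℝ ∙ x)ᗮ := span_le.2 fun a ha =>
    Submodule.mem_orthogonal_singleton_iff_inner_right.2 <| by
      rw [real_inner_comm]; exact hC.2.2.1 a ha x ⟨⟨hx, hxH⟩, hxC'⟩
  exact R.nonzero x hx <| inner_self_eq_zero.1 <|
    Submodule.mem_orthogonal_singleton_iff_inner_right.1 (this hxC)

def toCrystRS (hC : IsComponent (R.roots ∩ H) C) : CrystRS E where
  roots := C
  finite := R.finite.subset fun _ hβ => (hC.1 hβ).1
  nonzero β hβ := R.nonzero β (hC.1 hβ).1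
  neg_mem β hβ := hC.mem_of_mem_span (R.neg_mem β (hC.1 hβ).1) (H.neg_mem (hC.1 hβ).2)
    (neg_mem (subset_span hβ))
  cartan β hβ γ hγ := R.cartan β (hC.1 hβ).1 γ (hC.1 hγ).1
  reflect β hβ γ hγ := hC.mem_of_mem_span (R.reflect β (hC.1 hβ).1 γ (hC.1 hγ).1)
    (H.sub_mem (hC.1 hβ).2 (H.smul_mem _ (hC.1 hγ).2))
    (sub_mem (subset_span hβ) (Submodule.smul_mem _ _ (subset_span hγ)))

theorem irred_toCrystRS (hC : IsComponent (R.roots ∩ H) C) : hC.toCrystRS.Irred := hC.2.2.2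

end IsComponent

namespace BasedRS

variable {E : Type} [NormedAddCommGroup E] [InnerProductSpace ℝ E] {R : BasedRS E}
  {f : E →ₗ[ℝ] ℝ} {α β γ : E}

theorem mem_pos_of_apply_pos (hf : ∀ a ∈ R.simple, 0 ≤ f a) (hβ : β ∈ R.roots) (h : 0 < f β) :
    β ∈ R.pos := by
  refine (R.decomp β hβ).elim (⟨hβ, ·⟩) fun h' => ?_
  have := AddSubmonoid.apply_nonneg_of_mem_closure hf h'
  rw [map_neg] at this
  linarith

theorem mem_pos_iff (hf : ∀ a ∈ R.simple, 0 < f a) (hβ : β ∈ R.roots) : β ∈ R.pos ↔ 0 < f β :=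
  ⟨fun h => (AddSubmonoid.eq_zero_or_apply_pos_of_mem_closure hf h.2).resolve_left
    (R.nonzero β hβ), mem_pos_of_apply_pos (fun a ha => (hf a ha).le) hβ⟩

theorem apply_ne_zero (hf : ∀ a ∈ R.simple, 0 < f a) (hβ : β ∈ R.roots) : f β ≠ 0 := by
  rcases R.decomp β hβ with h | h
  · exact ((mem_pos_iff hf hβ).1 ⟨hβ, h⟩).ne'
  · have := (mem_pos_iff hf (R.neg_mem β hβ)).1 ⟨R.neg_mem β hβ, h⟩
    rw [map_neg, neg_pos] at this
    exact this.ne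

theorem apply_le_of_le (hf : ∀ a ∈ R.simple, 0 ≤ f a) (h : R.le β γ) : f β ≤ f γ := by
  have := AddSubmonoid.apply_nonneg_of_mem_closure hf h
  rwa [map_sub, sub_nonneg] at this

theorem apply_eq_one_of_coeffOne (hfα : f α = 1) (hf : ∀ a ∈ R.simple, a ≠ α → f a = 0)
    (h : R.coeffOne α γ) : f γ = 1 := by
  have : γ - α ∈ LinearMap.ker (f.restrictScalars ℤ) :=
    span_le.2 (fun a ha => hf a ha.1 ha.2) h
  rw [LinearMap.mem_ker, LinearMap.restrictScalars_apply, map_sub, hfα, sub_eq_zero] at this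
  exact this

theorem setOf_le_eq_setOf_apply_eq_one (hfα : f α = 1) (hf : ∀ a ∈ R.simple, a ≠ α → f a = 0)
    {θ : E} (hθ : R.IsHighest θ) (hfθ : f θ = 1) :
    {β ∈ R.pos | R.le α β} = {β ∈ R.pos | f β = 1} := by
  refine Set.ext fun β => and_congr_right fun hβ => ?_
  rw [BasedRS.le, AddSubmonoid.sub_mem_closure_iff_one_le hfα hf hβ.2]
  exact ⟨fun h => le_antisymm (hfθ ▸ apply_le_of_le
    (apply_nonneg_of_apply_eq_one_of_apply_eq_zero hfα hf) (hθ.2 β hβ.1)) h, fun h => h.ge⟩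

end BasedRS

theorem statement15_general {E : Type} [NormedAddCommGroup E] [InnerProductSpace ℝ E] (R : BasedRS E)
    (θ : E) (hθ : R.IsHighest θ)
    (I : Set E)
    (hI : I = ∅ ∨ ∃ α ∈ R.simple, R.coeffOne α θ ∧ I = {β ∈ R.pos | R.le α β})
    (H : Submodule ℝ E) :
    ∀ C : Set E, IsComponent (R.roots ∩ (H : Set E)) C →
      I ∩ C = ∅ ∨
      ∃ α θC : E, α ∈ SimpleOf (C ∩ R.pos) ∧
        θC ∈ C ∩ R.pos ∧ (∀ β ∈ C ∩ R.pos, leRel (C ∩ R.pos) β θC) ∧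
        θC - α ∈ Submodule.span ℤ (SimpleOf (C ∩ R.pos) \ {α}) ∧
        I ∩ C = {β ∈ C ∩ R.pos | leRel (C ∩ R.pos) α β} := by
  intro C hC
  rcases hI with rfl | ⟨α, hα, hαθ, rfl⟩
  · simp
  -- `g` is the height and `f` the coefficient of `α`
  obtain ⟨g, hg⟩ := LinearIndepOn.exists_linearMap_eq R.simple_indep fun _ => (1 : ℝ)
  obtain ⟨f, hf⟩ := LinearIndepOn.exists_linearMap_eq R.simple_indep (({α} : Set E).indicator 1)
  have hg0 : ∀ a ∈ R.simple, 0 < g a := fun a ha => by simp [hg a ha]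
  have hfα : f α = 1 := by simp [hf α hα]
  have hf₀ : ∀ a ∈ R.simple, a ≠ α → f a = 0 := fun a ha h => by simp [hf a ha, h]
  have hfθ := BasedRS.apply_eq_one_of_coeffOne hfα hf₀ hαθ
  have hpos : C ∩ R.pos = hC.toCrystRS.posPart g :=
    Set.ext fun β => and_congr_right fun hβ => BasedRS.mem_pos_iff hg0 (hC.1 hβ).1
  have hIC : {β ∈ R.pos | R.le α β} ∩ C = {β ∈ C ∩ R.pos | f β = 1} := by
    rw [BasedRS.setOf_le_eq_setOf_apply_eq_one hfα hf₀ hθ hfθ]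
    ext β
    simp only [Set.mem_inter_iff, Set.mem_ofPred_eq]
    tauto
  rw [hIC, hpos]
  refine hC.toCrystRS.levelSet_eq_empty_or_eq_principal
    (fun β hβ => BasedRS.apply_ne_zero hg0 (hC.1 hβ).1) hC.irred_toCrystRS (fun β hβ => ?_)
    fun β hβ => hfθ ▸ BasedRS.apply_le_of_le
      (apply_nonneg_of_apply_eq_one_of_apply_eq_zero hfα hf₀) (hθ.2 β (hC.1 hβ.1).1)
  refine AddSubmonoid.exists_nat_eq_of_mem_closure (fun a ha => ?_) (hpos ▸ hβ).2.2
  rcases eq_or_ne a α with rfl | h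
  exacts [⟨1, by simp [hfα]⟩, ⟨0, by simp [hf₀ a ha h]⟩]

theorem statement15 {E : Type} [NormedAddCommGroup E] [InnerProductSpace ℝ E] (R : BasedRS E) (hirr : R.toCrystRS.Irred)
    (θ : E) (hθ : R.IsHighest θ)
    (I : Set E)
    (hI : I = ∅ ∨ ∃ α ∈ R.simple, R.coeffOne α θ ∧ I = {β ∈ R.pos | R.le α β})
    (H : Submodule ℝ E) :
    ∀ C : Set E, IsComponent (R.roots ∩ (H : Set E)) C →
      I ∩ C = ∅ ∨
      ∃ α θC : E, α ∈ SimpleOf (C ∩ R.pos) ∧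
        θC ∈ C ∩ R.pos ∧ (∀ β ∈ C ∩ R.pos, leRel (C ∩ R.pos) β θC) ∧
        θC - α ∈ Submodule.span ℤ (SimpleOf (C ∩ R.pos) \ {α}) ∧
        I ∩ C = {β ∈ C ∩ R.pos | leRel (C ∩ R.pos) α β} :=
  statement15_general R θ hθ I hI H
end

section
/- Let I be an abelian ideal of Φ⁺, let β ∈ I be a long root, and γ ∈ I with γ ≠ β. Then β - γ ∈ Φ if and only if (β∨, γ) = 1, and otherwise (β∨, γ) = 0. -/
local notation "⟪" x ", " y "⟫" => @inner ℝ _ _ x y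

/-!
Write `n = 2⟪γ, β⟫ / ⟪β, β⟫ ∈ ℤ`. Since `β` is long and `γ ≠ β`, expanding `‖γ - β‖²` forces
`n < 2`; likewise `n > -2`, as `γ = -β` would make both `β` and `-β` positive. If `n = -1`, the
reflection of `γ` in `β` is `γ + β`, a root, which the abelian ideal forbids. So `n ∈ {0, 1}`.
For `n = 1` the reflection gives `γ - β`, hence `β - γ`, as a root; for `n = 0` Pythagoras
makes `β - γ` strictly longer than the long root `β`, so it is not a root.
-/

theorem AddSubmonoid.eq_zero_of_mem_closure_of_neg_mem_closure {M : Type*} [AddCommGroup M]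
    [Module ℝ M] {s : Finset M} (hs : LinearIndependent ℝ (fun α : s => (α : M))) {x : M}
    (hx : x ∈ AddSubmonoid.closure (s : Set M)) (hx' : -x ∈ AddSubmonoid.closure (s : Set M)) :
    x = 0 := by
  obtain ⟨a, rfl⟩ := AddSubmonoid.mem_closure_finset'.1 hx
  obtain ⟨b, hb⟩ := AddSubmonoid.mem_closure_finset'.1 hx'
  have hsum : ∑ α : s, ((a α + b α : ℕ) : ℝ) • (α : M) = 0 := by
    simp only [Nat.cast_add, add_smul, Finset.sum_add_distrib, Nat.cast_smul_eq_nsmul, ← hb,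
      add_neg_cancel]
  have hab := Fintype.linearIndependent_iff.1 hs _ hsum
  refine Finset.sum_eq_zero fun α _ => ?_
  have : a α = 0 := by exact_mod_cast (Nat.eq_zero_of_add_eq_zero (by exact_mod_cast hab α)).1
  rw [this, zero_smul]

section InnerProductSpace

variable {E : Type} [NormedAddCommGroup E] [InnerProductSpace ℝ E]

theorem two_inner_div_inner_self_lt_two {β γ : E} (hβ : β ≠ 0) (hle : ‖γ‖ ≤ ‖β‖)
    (hne : γ ≠ β) : 2 * ⟪γ, β⟫ / ⟪β, β⟫ < 2 := by
  have hββ : 0 < ⟪β, β⟫ := real_inner_self_pos.2 hβ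
  rw [div_lt_iff₀ hββ]
  by_contra! h
  -- `‖γ - β‖² = ‖γ‖² - 2⟪γ, β⟫ + ‖β‖² ≤ 2‖β‖² - 2‖β‖²`
  have hsq : ‖γ - β‖ ^ 2 ≤ 0 := by
    nlinarith [norm_sub_sq_real γ β, real_inner_self_eq_norm_sq β, norm_nonneg γ]
  exact hne (by simpa [sub_eq_zero] using hsq)

theorem norm_lt_norm_sub_of_inner_eq_zero {β γ : E} (h : ⟪γ, β⟫ = 0) (hγ : γ ≠ 0) :
    ‖β‖ < ‖β - γ‖ := by
  have hpyth := norm_sub_sq_eq_norm_sq_add_norm_sq_real (real_inner_comm γ β ▸ h)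
  have hγpos := norm_pos_iff.2 hγ
  nlinarith [norm_nonneg β, norm_nonneg (β - γ)]

end InnerProductSpace

namespace CrystRS

variable {E : Type} [NormedAddCommGroup E] [InnerProductSpace ℝ E] (R : CrystRS E)
  {β γ : E}

theorem exists_int_two_inner_div_eq (hβ : β ∈ R.roots) (hγ : γ ∈ R.roots) :
    ∃ n : ℤ, 2 * ⟪γ, β⟫ / ⟪β, β⟫ = n := by
  obtain ⟨n, hn⟩ := R.cartan γ hγ β hβ
  have hββ : ⟪β, β⟫ ≠ 0 := (real_inner_self_pos.2 (R.nonzero β hβ)).ne'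
  exact ⟨n, by rw [hn, mul_div_cancel_right₀ _ hββ]⟩

theorem sub_int_smul_mem_roots (hβ : β ∈ R.roots) (hγ : γ ∈ R.roots) {n : ℤ}
    (hn : 2 * ⟪γ, β⟫ / ⟪β, β⟫ = n) : γ - (n : ℝ) • β ∈ R.roots :=
  hn ▸ R.reflect γ hγ β hβ

end CrystRS

theorem BasedRS.neg_notMem_pos {E : Type} [NormedAddCommGroup E] [InnerProductSpace ℝ E]
    (R : BasedRS E) {β : E} (hβ : β ∈ R.pos) : -β ∉ R.pos := fun hnβ =>
  R.nonzero β hβ.1 <|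
    AddSubmonoid.eq_zero_of_mem_closure_of_neg_mem_closure R.simple_indep hβ.2 hnβ.2

theorem statement16_general {E : Type} [NormedAddCommGroup E] [InnerProductSpace ℝ E] (R : BasedRS E)
    (I : Set E) (hI : R.IsAbelianIdeal I)
    (β γ : E) (hβ : β ∈ I) (hlong : R.IsLong β) (hγ : γ ∈ I) (hne : γ ≠ β) :
    (β - γ ∈ R.roots ↔ 2 * ⟪γ, β⟫ / ⟪β, β⟫ = 1) ∧
    (β - γ ∉ R.roots → 2 * ⟪γ, β⟫ / ⟪β, β⟫ = 0) := by
  obtain ⟨hIpos, -, hIab⟩ := hI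
  have hβr := (hIpos hβ).1
  have hγr := (hIpos hγ).1
  have hβ0 := R.nonzero β hβr
  have hlen := hlong.2 γ hγr
  obtain ⟨n, hn⟩ := R.exists_int_two_inner_div_eq hβr hγr
  have hlt : n < 2 := by exact_mod_cast hn ▸ two_inner_div_inner_self_lt_two hβ0 hlen hne
  have hgt : -2 < n := by
    have hne' : -γ ≠ β := fun h => R.neg_notMem_pos (hIpos hγ) (h ▸ hIpos hβ)
    have := two_inner_div_inner_self_lt_two hβ0 ((norm_neg γ).symm ▸ hlen) hne'
    rw [inner_neg_left, mul_neg, neg_div, hn] at this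
    exact_mod_cast neg_lt.1 this
  have hne1 : n ≠ -1 := by
    rintro rfl
    refine hIab β hβ γ hγ ?_
    convert R.sub_int_smul_mem_roots hβr hγr hn using 1
    push_cast; module
  rw [hn]
  obtain rfl | rfl : n = 0 ∨ n = 1 := by omega
  · have hinner : ⟪γ, β⟫ = 0 := by simpa [hβ0] using hn
    have : β - γ ∉ R.roots := fun h =>
      (norm_lt_norm_sub_of_inner_eq_zero hinner (R.nonzero γ hγr)).not_ge (hlong.2 _ h)
    simp [this]
  · have : β - γ ∈ R.roots := by
      simpa using R.neg_mem _ (R.sub_int_smul_mem_roots hβr hγr hn)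
    simp [this]

theorem statement16 {E : Type} [NormedAddCommGroup E] [InnerProductSpace ℝ E] (R : BasedRS E) (hirr : R.toCrystRS.Irred)
    (I : Set E) (hI : R.IsAbelianIdeal I)
    (β γ : E) (hβ : β ∈ I) (hlong : R.IsLong β) (hγ : γ ∈ I) (hne : γ ≠ β) :
    (β - γ ∈ R.roots ↔ 2 * ⟪γ, β⟫ / ⟪β, β⟫ = 1) ∧
    (β - γ ∉ R.roots → 2 * ⟪γ, β⟫ / ⟪β, β⟫ = 0) :=
  statement16_general R I hI β γ hβ hlong hγ hne
end

section
/- Let Φ be a finite irreducible crystallographic root system with highest root θ. The root polytope P(Φ) = conv(Φ) equals the convex hull of the long roots of Φ. -/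
local notation "⟪" x ", " y "⟫" => @inner ℝ _ _ x y

/-!
If `b` is a root and `γ` a long root with `⟪b, γ⟫ > 0`, either `b` is long or the Cartan
integer `p = 2⟪γ, b⟫ / ⟪b, b⟫` is at least `2`; then `p • b - γ = -s_b(γ)` is again long, so
`(p / 2) • b` is the midpoint of two long roots and `b` lies on the segment from `0` to it.
Hence every root not orthogonal to all long roots lies in the convex hull of the long roots;
this hull is orthogonal to the remaining roots, which therefore form an orthogonal summand
that irreducibility forces to be empty.
-/

lemma norm_smul_sub_eq_of_two_inner_eq {E : Type*} [NormedAddCommGroup E] [InnerProductSpace ℝ E]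
    {b γ : E} {p : ℝ}
    (hp : 2 * ⟪γ, b⟫ = p * ⟪b, b⟫) : ‖p • b - γ‖ = ‖γ‖ := by
  have : ⟪p • b - γ, p • b - γ⟫ = ⟪γ, γ⟫ := by
    simp only [inner_sub_left, inner_sub_right, real_inner_smul_left, real_inner_smul_right,
      real_inner_comm γ b]
    linear_combination (-p) * hp
  rw [norm_eq_sqrt_real_inner, norm_eq_sqrt_real_inner, this]

namespace CrystRS

variable {E : Type} [NormedAddCommGroup E] [InnerProductSpace ℝ E] (R : CrystRS E)

def longRoots : Set E := {β ∈ R.roots | ∀ γ ∈ R.roots, ‖γ‖ ≤ ‖β‖}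

variable {R}

lemma neg_mem_longRoots {γ : E} (hγ : γ ∈ R.longRoots) : -γ ∈ R.longRoots :=
  ⟨R.neg_mem γ hγ.1, fun δ hδ => (norm_neg γ).symm ▸ hγ.2 δ hδ⟩

lemma longRoots_nonempty_of_mem {b : E} (hb : b ∈ R.roots) : R.longRoots.Nonempty :=
  Set.exists_max_image R.roots (‖·‖) R.finite ⟨b, hb⟩

lemma zero_mem_convexHull_longRoots {γ : E} (hγ : γ ∈ R.longRoots) :
    (0 : E) ∈ convexHull ℝ R.longRoots := by
  have := convex_convexHull ℝ R.longRoots (subset_convexHull ℝ _ hγ)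
    (subset_convexHull ℝ _ (neg_mem_longRoots hγ)) (by norm_num : (0 : ℝ) ≤ 1 / 2)
    (by norm_num : (0 : ℝ) ≤ 1 / 2) (by norm_num)
  rwa [smul_neg, add_neg_cancel] at this

lemma two_le_cartan_of_norm_lt {b γ : E} (hb : b ∈ R.roots) (hγ : γ ∈ R.roots)
    (hinner : 0 < ⟪b, γ⟫) (hlt : ‖b‖ < ‖γ‖) :
    ∃ p : ℤ, 2 ≤ p ∧ 2 * ⟪γ, b⟫ = p * ⟪b, b⟫ := by
  obtain ⟨p, hp⟩ := R.cartan γ hγ b hb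
  obtain ⟨q, hq⟩ := R.cartan b hb γ hγ
  have hb0 : 0 < ⟪b, b⟫ := real_inner_self_pos.2 (R.nonzero b hb)
  have hbγ : ⟪b, b⟫ < ⟪γ, γ⟫ := by
    rw [real_inner_self_eq_norm_sq, real_inner_self_eq_norm_sq]
    exact pow_lt_pow_left₀ hlt (norm_nonneg b) two_ne_zero
  rw [real_inner_comm] at hp
  -- `q` and `p` are positive with `p / q = ‖γ‖² / ‖b‖² > 1`.
  have hq_pos : (0 : ℝ) < q := by nlinarith
  have hqp : (q : ℝ) < p := by nlinarith
  have : 0 < q := by exact_mod_cast hq_pos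
  have : q < p := by exact_mod_cast hqp
  exact ⟨p, by omega, by rw [real_inner_comm, hp]⟩

lemma smul_sub_mem_longRoots {b γ : E} {p : ℤ} (hb : b ∈ R.roots) (hγ : γ ∈ R.longRoots)
    (hp : 2 * ⟪γ, b⟫ = p * ⟪b, b⟫) : (p : ℝ) • b - γ ∈ R.longRoots := by
  have hb0 : ⟪b, b⟫ ≠ 0 := (real_inner_self_pos.2 (R.nonzero b hb)).ne'
  have hrefl := R.neg_mem _ (R.reflect γ hγ.1 b hb)
  rw [hp, mul_div_cancel_right₀ _ hb0, neg_sub] at hrefl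
  exact ⟨hrefl, fun δ hδ => (norm_smul_sub_eq_of_two_inner_eq hp).symm ▸ hγ.2 δ hδ⟩

lemma mem_convexHull_longRoots_of_inner_pos {b γ : E} (hb : b ∈ R.roots)
    (hγ : γ ∈ R.longRoots) (hinner : 0 < ⟪b, γ⟫) : b ∈ convexHull ℝ R.longRoots := by
  by_cases hlong : b ∈ R.longRoots
  · exact subset_convexHull ℝ _ hlong
  have hlt : ‖b‖ < ‖γ‖ := by
    obtain ⟨δ, hδ, hδb⟩ : ∃ δ ∈ R.roots, ‖b‖ < ‖δ‖ := by
      simpa [longRoots, hb] using hlong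
    exact hδb.trans_le (hγ.2 δ hδ)
  obtain ⟨p, hp2, hp⟩ := two_le_cartan_of_norm_lt hb hγ.1 hinner hlt
  have hp2' : (2 : ℝ) ≤ p := by exact_mod_cast hp2
  have hconv := convex_convexHull ℝ R.longRoots
  have hmid : ((p : ℝ) / 2) • b ∈ convexHull ℝ R.longRoots := by
    have := hconv (subset_convexHull ℝ _ (smul_sub_mem_longRoots hb hγ hp))
      (subset_convexHull ℝ _ hγ) (by norm_num : (0 : ℝ) ≤ 1 / 2)
      (by norm_num : (0 : ℝ) ≤ 1 / 2) (by norm_num)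
    convert this using 1
    module
  have := hconv.smul_mem_of_zero_mem (zero_mem_convexHull_longRoots hγ) hmid
    (t := 2 / p) ⟨by positivity, (div_le_one (by linarith)).2 hp2'⟩
  rwa [smul_smul, div_mul_div_cancel₀ (by linarith), div_self two_ne_zero, one_smul] at this

lemma mem_convexHull_longRoots_of_inner_ne_zero {b γ : E} (hb : b ∈ R.roots)
    (hγ : γ ∈ R.longRoots) (hinner : ⟪b, γ⟫ ≠ 0) : b ∈ convexHull ℝ R.longRoots := by
  rcases hinner.lt_or_gt with hneg | hpos
  · refine mem_convexHull_longRoots_of_inner_pos hb (neg_mem_longRoots hγ) ?_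
    rwa [inner_neg_right, neg_pos]
  · exact mem_convexHull_longRoots_of_inner_pos hb hγ hpos

lemma convexHull_longRoots_subset_orthogonal {c : E} (hc : ∀ γ ∈ R.longRoots, ⟪c, γ⟫ = 0) :
    convexHull ℝ R.longRoots ⊆ (ℝ ∙ c)ᗮ :=
  convexHull_min (fun γ hγ => Submodule.mem_orthogonal_singleton_iff_inner_right.2 (hc γ hγ))
    (Submodule.convex _)

lemma roots_subset_convexHull_longRoots (hirr : R.Irred) :
    R.roots ⊆ convexHull ℝ R.longRoots := by
  intro b hb
  set A := {a ∈ R.roots | ∃ γ ∈ R.longRoots, ⟪a, γ⟫ ≠ 0}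
  set B := {a ∈ R.roots | ∀ γ ∈ R.longRoots, ⟪a, γ⟫ = 0}
  have hAB : R.roots = A ∪ B := by
    ext a
    simp only [A, B, Set.mem_union, Set.mem_ofPred_eq, ← and_or_left, iff_self_and]
    intro _
    by_cases h : ∀ γ ∈ R.longRoots, ⟪a, γ⟫ = 0
    · exact Or.inr h
    · push Not at h
      exact Or.inl h
  have horth : ∀ a ∈ A, ∀ c ∈ B, ⟪a, c⟫ = 0 := by
    rintro a ⟨ha, γ, hγ, haγ⟩ c ⟨-, hc⟩
    rw [real_inner_comm, ← Submodule.mem_orthogonal_singleton_iff_inner_right]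
    exact convexHull_longRoots_subset_orthogonal hc
      (mem_convexHull_longRoots_of_inner_ne_zero ha hγ haγ)
  obtain ⟨θ, hθ⟩ := longRoots_nonempty_of_mem hb
  have hθA : θ ∈ A := ⟨hθ.1, θ, hθ, (real_inner_self_pos.2 (R.nonzero θ hθ.1)).ne'⟩
  rcases hirr A B hAB horth with hA | hB
  · simp [hA] at hθA
  · obtain ⟨-, γ, hγ, hbγ⟩ : b ∈ A := by rwa [hAB, hB, Set.union_empty] at hb
    exact mem_convexHull_longRoots_of_inner_ne_zero hb hγ hbγ

end CrystRS

theorem statement19 {E : Type} [NormedAddCommGroup E] [InnerProductSpace ℝ E] (R : CrystRS E) (hirr : R.Irred) :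
    convexHull ℝ R.roots =
      convexHull ℝ {β ∈ R.roots | ∀ γ ∈ R.roots, ‖γ‖ ≤ ‖β‖} :=
  (convexHull_mono fun _ hβ => hβ.1).antisymm'
    (convexHull_min (R.roots_subset_convexHull_longRoots hirr) (convex_convexHull ℝ _))
end
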